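/- Let D ⊂ ℝⁿ be a nonempty open bounded set, let q_D : ℝⁿ → ℝ be measurable with μ ≤ q_D(x) ≤ M for all x ∈ D (where μ > 0), let m ≥ 1 be an integer, and let J, t ∈ ℝ with t > inf_{x∈D} ⟨x, ω⟩. Then e^{2mJ/h} · ∫_D q_D(x) |v_h(x)|^{2m} dx → +∞ as h → 0⁺. -/

import Mathlib

open RealInnerProductSpace MeasureTheory Filter

/-- STATEMENT 16: let `D ⊂ ℝⁿ` be nonempty, open and bounded, `q_D` measurable with
`μ₀ ≤ q_D ≤ M` on `D` (`μ₀ > 0`), `m ≥ 1`, and `t > inf_{x∈D} ⟨x,ω⟩`. Then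
`e^{2mJ/h} · ∫_D q_D(x) |v_h(x)|^{2m} dx → +∞` as `h → 0⁺`, where
`v_h(x) = e^{−J/h} exp(−(1/h)(⟨x,ω⟩ + i⟨x,ω⊥⟩ − t))`. -/
theorem stmt16 {n : ℕ} (hn : 1 ≤ n) (ω ωp : EuclideanSpace ℝ (Fin n))
    (hω : ‖ω‖ = 1) (hωp : ‖ωp‖ = 1) (horth : ⟪ω, ωp⟫ = 0)
    (D : Set (EuclideanSpace ℝ (Fin n))) (hDne : D.Nonempty)
    (hDo : IsOpen D) (hDb : Bornology.IsBounded D)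
    (qD : EuclideanSpace ℝ (Fin n) → ℝ) (hqDm : Measurable qD)
    (μ₀ M : ℝ) (hμ₀ : 0 < μ₀) (hq : ∀ x ∈ D, μ₀ ≤ qD x ∧ qD x ≤ M)
    (m : ℕ) (hm : 1 ≤ m) (J t : ℝ)
    (ht : sInf ((fun x => ⟪x, ω⟫) '' D) < t) :
    Tendsto (fun h : ℝ =>
        Real.exp (2 * m * J / h) *
          ∫ x in D, qD x *
            ‖(Real.exp (-J / h) : ℂ) *
              Complex.exp (-(1 / (h : ℂ)) *
                ((⟪x, ω⟫ : ℂ) + Complex.I * (⟪x, ωp⟫ : ℂ) - (t : ℂ)))‖ ^ (2 * m))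
      (nhdsWithin 0 (Set.Ioi 0)) atTop := by
  obtain ⟨a₀, ⟨x₀, hx₀D, rfl⟩, ha₀⟩ := exists_lt_of_csInf_lt (hDne.image _) ht
  set c : ℝ := (t - ⟪x₀, ω⟫) / 2 with hc
  have hcpos : 0 < c := by simp only [hc]; linarith
  set U : Set (EuclideanSpace ℝ (Fin n)) := D ∩ {x | ⟪x, ω⟫ < t - c} with hUdef
  have hinner : Continuous fun x : EuclideanSpace ℝ (Fin n) => ⟪x, ω⟫ :=
    continuous_id.inner continuous_const
  have hUopen : IsOpen U := hDo.inter (isOpen_lt hinner continuous_const)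
  have hx₀U : x₀ ∈ U := ⟨hx₀D, by simp only [Set.mem_setOf_eq, hc]; linarith⟩
  have hUD : U ⊆ D := Set.inter_subset_left
  have hUpos : 0 < volume U := hUopen.measure_pos volume ⟨x₀, hx₀U⟩
  have hDfin : volume D < ⊤ := hDb.measure_lt_top
  have hUfin : volume U < ⊤ := lt_of_le_of_lt (measure_mono hUD) hDfin
  have hvol : 0 < (volume U).toReal := ENNReal.toReal_pos hUpos.ne' hUfin.ne
  obtain ⟨R, hR⟩ := hDb.subset_ball 0
  have hmpos : (0:ℝ) < m := by exact_mod_cast lt_of_lt_of_le one_pos hm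
  have hlow : Tendsto (fun h : ℝ => (μ₀ * (volume U).toReal) * Real.exp (2 * m * c / h))
      (nhdsWithin 0 (Set.Ioi 0)) atTop := by
    have hK : (0:ℝ) < 2 * m * c := by positivity
    have h1 : Tendsto (fun h : ℝ => 2 * m * c / h) (nhdsWithin 0 (Set.Ioi 0)) atTop := by
      simpa [div_eq_mul_inv] using tendsto_inv_nhdsGT_zero.const_mul_atTop hK
    exact (Real.tendsto_exp_atTop.comp h1).const_mul_atTop (by positivity)
  refine tendsto_atTop_mono' _ ?_ hlow
  filter_upwards [self_mem_nhdsWithin] with h hh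
  have hhpos : 0 < h := hh
  have hhne : h ≠ 0 := hhpos.ne'
  have hmble : Measurable fun x : EuclideanSpace ℝ (Fin n) =>
      qD x * Real.exp (2 * m * (t - ⟪x, ω⟫) / h) :=
    hqDm.mul (Real.measurable_exp.comp
      ((measurable_const.mul (measurable_const.sub hinner.measurable)).div_const h))
  have hbound : ∀ x ∈ D, ‖qD x * Real.exp (2 * m * (t - ⟪x, ω⟫) / h)‖
      ≤ M * Real.exp (2 * m * (|t| + R) / h) := by
    intro x hxD
    have h1 := (hq x hxD).1
    have h2 := (hq x hxD).2
    have hxR : ‖x‖ < R := by simpa using hR hxD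
    have hiR : |⟪x, ω⟫| ≤ ‖x‖ := by simpa [hω] using abs_real_inner_le_norm x ω
    have habs := abs_le.1 hiR
    have hexp : Real.exp (2 * m * (t - ⟪x, ω⟫) / h) ≤ Real.exp (2 * m * (|t| + R) / h) := by
      apply Real.exp_le_exp.2
      apply div_le_div_of_nonneg_right ?_ hhpos.le
      have hta : t - ⟪x, ω⟫ ≤ |t| + R := by
        have := le_abs_self t; linarith
      nlinarith
    rw [Real.norm_eq_abs, abs_mul, abs_of_pos (Real.exp_pos _),
      abs_of_pos (lt_of_lt_of_le hμ₀ h1)]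
    exact mul_le_mul h2 hexp (Real.exp_pos _).le (by linarith)
  have hintD : IntegrableOn (fun x => qD x * Real.exp (2 * m * (t - ⟪x, ω⟫) / h)) D volume := by
    apply Measure.integrableOn_of_bounded hDfin.ne hmble.aestronglyMeasurable
    exact (ae_restrict_iff' hDo.measurableSet).2 (ae_of_all _ hbound)
  have hintU : IntegrableOn (fun x => qD x * Real.exp (2 * m * (t - ⟪x, ω⟫) / h)) U volume :=
    hintD.mono_set hUD
  have hpt : ∀ x : EuclideanSpace ℝ (Fin n),
      Real.exp (2 * m * J / h) * (qD x *
        ‖(Real.exp (-J / h) : ℂ) *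
          Complex.exp (-(1 / (h : ℂ)) *
            ((⟪x, ω⟫ : ℂ) + Complex.I * (⟪x, ωp⟫ : ℂ) - (t : ℂ)))‖ ^ (2 * m))
      = qD x * Real.exp (2 * m * (t - ⟪x, ω⟫) / h) := by
    intro x
    have hre : (-(1 / (h : ℂ)) * ((⟪x, ω⟫ : ℂ) + Complex.I * (⟪x, ωp⟫ : ℂ) - (t : ℂ))).re
        = (t - ⟪x, ω⟫) / h := by
      have e : -(1 / (h : ℂ)) = ((-(1/h) : ℝ) : ℂ) := by push_cast; ring
      rw [e, Complex.re_ofReal_mul]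
      simp
      field_simp
      ring
    rw [norm_mul, Complex.norm_real, Real.norm_eq_abs, abs_of_pos (Real.exp_pos _), Complex.norm_exp, hre,
      ← Real.exp_add, ← Real.exp_nat_mul]
    have key : Real.exp (2 * m * J / h) *
        Real.exp ((2 * m : ℕ) * (-J / h + (t - ⟪x, ω⟫) / h))
        = Real.exp (2 * m * (t - ⟪x, ω⟫) / h) := by
      rw [← Real.exp_add]; congr 1; push_cast; field_simp; ring
    linear_combination qD x * key
  calc μ₀ * (volume U).toReal * Real.exp (2 * m * c / h)
      ≤ ∫ x in U, qD x * Real.exp (2 * m * (t - ⟪x, ω⟫) / h) := by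
        have hconst : IntegrableOn (fun _ : EuclideanSpace ℝ (Fin n) =>
            μ₀ * Real.exp (2 * m * c / h)) U volume :=
          integrableOn_const hUfin.ne
        have hmono := setIntegral_mono_on hconst hintU hUopen.measurableSet (fun x hx => by
          have h1 := (hq x (hUD hx)).1
          have hxlt : ⟪x, ω⟫ < t - c := hx.2
          have hexp : Real.exp (2 * m * c / h) ≤ Real.exp (2 * m * (t - ⟪x, ω⟫) / h) := by
            apply Real.exp_le_exp.2
            apply div_le_div_of_nonneg_right ?_ hhpos.le
            nlinarith
          exact mul_le_mul h1 hexp (Real.exp_pos _).le (le_of_lt (lt_of_lt_of_le hμ₀ h1)))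
        calc μ₀ * (volume U).toReal * Real.exp (2 * m * c / h)
            = ∫ _ in U, μ₀ * Real.exp (2 * m * c / h) := by
              rw [setIntegral_const]; simp only [smul_eq_mul, measureReal_def]; ring
          _ ≤ _ := hmono
    _ ≤ ∫ x in D, qD x * Real.exp (2 * m * (t - ⟪x, ω⟫) / h) := by
        apply setIntegral_mono_set hintD
        · refine (ae_restrict_iff' hDo.measurableSet).2 (ae_of_all _ fun x hxD => ?_)
          have h1 : 0 < qD x := lt_of_lt_of_le hμ₀ (hq x hxD).1
          positivity
        · exact HasSubset.Subset.eventuallyLE hUD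
    _ = Real.exp (2 * m * J / h) *
          ∫ x in D, qD x *
            ‖(Real.exp (-J / h) : ℂ) *
              Complex.exp (-(1 / (h : ℂ)) *
                ((⟪x, ω⟫ : ℂ) + Complex.I * (⟪x, ωp⟫ : ℂ) - (t : ℂ)))‖ ^ (2 * m) := by
        rw [← integral_const_mul]
        exact setIntegral_congr_fun hDo.measurableSet (fun x _ => (hpt x).symm)
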